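/- arXiv:math/0610270 — 3 statements merged into one kernel-verified Lean document; each statement's English description precedes it below -/
import Mathlib

section
/- For an integer p ≥ 1 and 0 < α ≤ π/2 with ε = sin α, one has ε^p / p ≤ J_{p,p}(α) ≤ (O_p / (2 O_{p-1})) ε^p, where O_m denotes the m-dimensional volume of the unit sphere S^m, with equality in the upper bound when α = π/2. -/
open Real MeasureTheory
open scoped RealInnerProductSpace

/-- `Osph m` is the m-dimensional volume of the unit m-sphere. -/
noncomputable def Osph (m : ℕ) : ℝ := 2 * Real.pi ^ ((m + 1 : ℝ) / 2) / Real.Gamma ((m + 1 : ℝ) / 2)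

/-- `Jpk p k α = ∫₀^α (sin ρ)^(k-1) (cos ρ)^(p-k) dρ`. -/
noncomputable def Jpk (p k : ℕ) (α : ℝ) : ℝ :=
  ∫ ρ in (0:ℝ)..α, Real.sin ρ ^ (k - 1) * Real.cos ρ ^ (p - k)

-- S formula
lemma S_formula (n : ℕ) : ∫ x in (0:ℝ)..(π/2), sin x ^ n =
    Real.sqrt π / 2 * Real.Gamma (((n:ℝ)+1)/2) / Real.Gamma ((n:ℝ)/2 + 1) := by
  induction n using Nat.twoStepInduction with
  | zero =>
    norm_num [Real.Gamma_one, Real.Gamma_one_half_eq]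
    rw [div_mul_eq_mul_div, Real.mul_self_sqrt pi_pos.le]
  | one =>
    have h32 : Real.Gamma ((3:ℝ)/2) = Real.sqrt π / 2 := by
      rw [show (3:ℝ)/2 = 1/2 + 1 by norm_num,
        Real.Gamma_add_one (by norm_num), Real.Gamma_one_half_eq]
      ring
    norm_num [Real.Gamma_one, h32]
    exact (div_self (by positivity : Real.sqrt π / 2 ≠ 0)).symm
  | more n ih _ =>
    rw [integral_sin_pow, Real.sin_zero, Real.cos_pi_div_two, ih]
    have e1 : ((n:ℝ)+2+1)/2 = ((n:ℝ)+1)/2 + 1 := by ring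
    have e2 : ((n:ℝ)+2)/2 + 1 = ((n:ℝ)/2 + 1) + 1 := by ring
    push_cast
    rw [e1, e2, Real.Gamma_add_one (s := ((n:ℝ)+1)/2) (by positivity),
      Real.Gamma_add_one (s := (n:ℝ)/2 + 1) (by positivity)]
    have h1 : Real.Gamma ((n:ℝ)/2 + 1) ≠ 0 := (Real.Gamma_pos_of_pos (by positivity)).ne'
    have h2 : ((n:ℝ)/2 + 1) ≠ 0 := by positivity
    have h3 : ((n:ℝ) + 2) ≠ 0 := by positivity
    field_simp
    ring

lemma Osph_const (n : ℕ) :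
    Osph (n+1) / (2 * Osph n) = ∫ x in (0:ℝ)..(π/2), sin x ^ n := by
  rw [S_formula, Osph, Osph]
  have e1 : ((n:ℝ)+1+1)/2 = (n:ℝ)/2 + 1 := by ring
  push_cast
  rw [e1]
  have hg1 : Real.Gamma ((n:ℝ)/2 + 1) ≠ 0 := (Real.Gamma_pos_of_pos (by positivity)).ne'
  have hg2 : Real.Gamma (((n:ℝ)+1)/2) ≠ 0 := (Real.Gamma_pos_of_pos (by positivity)).ne'
  have hp1 : (0:ℝ) < π ^ (((n:ℝ)+1)/2) := Real.rpow_pos_of_pos pi_pos _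
  have hsq : π ^ (((n:ℝ)/2 + 1)) = Real.sqrt π * π ^ (((n:ℝ)+1)/2) := by
    rw [Real.sqrt_eq_rpow, ← Real.rpow_add pi_pos]
    ring_nf
  rw [hsq]
  field_simp

lemma hasDerivAt_I (n : ℕ) (x : ℝ) :
    HasDerivAt (fun y => ∫ t in (0:ℝ)..y, sin t ^ n) (sin x ^ n) x :=
  intervalIntegral.integral_hasDerivAt_right ((continuous_sin.pow n).intervalIntegrable _ _)
    ((continuous_sin.pow n).stronglyMeasurableAtFilter _ _) (continuous_sin.pow n).continuousAt

lemma sin_pow_cos_int (n : ℕ) (x : ℝ) :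
    ∫ t in (0:ℝ)..x, sin t ^ n * cos t = sin x ^ (n+1) / (n+1) := by
  have h := integral_sin_pow_mul_cos_pow_odd (a := 0) (b := x) n 0
  simpa [integral_pow] using h

lemma key_ineq (n : ℕ) {x : ℝ} (hx0 : 0 ≤ x) (hx : x ≤ π/2) :
    ((n:ℝ)+1) * cos x * (∫ t in (0:ℝ)..x, sin t ^ n) ≤ sin x ^ (n+1) := by
  have hint : ∀ t ∈ Set.Icc (0:ℝ) x, cos x * sin t ^ n ≤ sin t ^ n * cos t := by
    intro t ht
    have h1 : cos x ≤ cos t :=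
      Real.cos_le_cos_of_nonneg_of_le_pi ht.1 (by linarith [pi_pos, ht.2]) (ht.2)
    have h2 : (0:ℝ) ≤ sin t ^ n :=
      pow_nonneg (Real.sin_nonneg_of_nonneg_of_le_pi ht.1 (by linarith [pi_pos, ht.2])) n
    calc cos x * sin t ^ n ≤ cos t * sin t ^ n := mul_le_mul_of_nonneg_right h1 h2
      _ = sin t ^ n * cos t := mul_comm _ _
  have hmono : (∫ t in (0:ℝ)..x, cos x * sin t ^ n) ≤ ∫ t in (0:ℝ)..x, sin t ^ n * cos t :=
    intervalIntegral.integral_mono_on hx0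
      ((continuous_const.mul (continuous_sin.pow n)).intervalIntegrable _ _)
      (((continuous_sin.pow n).mul continuous_cos).intervalIntegrable _ _) hint
  have h3 : cos x * (∫ t in (0:ℝ)..x, sin t ^ n) = ∫ t in (0:ℝ)..x, cos x * sin t ^ n :=
    (intervalIntegral.integral_const_mul _ _).symm
  have hn : (0:ℝ) < (n:ℝ) + 1 := by positivity
  calc ((n:ℝ)+1) * cos x * (∫ t in (0:ℝ)..x, sin t ^ n)
      = ((n:ℝ)+1) * (∫ t in (0:ℝ)..x, cos x * sin t ^ n) := by rw [mul_assoc, h3]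
    _ ≤ ((n:ℝ)+1) * (∫ t in (0:ℝ)..x, sin t ^ n * cos t) := by
        exact mul_le_mul_of_nonneg_left hmono hn.le
    _ = sin x ^ (n+1) := by rw [sin_pow_cos_int]; field_simp

lemma lower_bound (n : ℕ) {a : ℝ} (ha : 0 < a) (ha' : a ≤ π/2) :
    sin a ^ (n+1) / ((n:ℝ)+1) ≤ ∫ t in (0:ℝ)..a, sin t ^ n := by
  rw [← sin_pow_cos_int]
  apply intervalIntegral.integral_mono_on ha.le
    (((continuous_sin.pow n).mul continuous_cos).intervalIntegrable _ _)
    ((continuous_sin.pow n).intervalIntegrable _ _)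
  intro t ht
  have h2 : (0:ℝ) ≤ sin t ^ n :=
    pow_nonneg (Real.sin_nonneg_of_nonneg_of_le_pi ht.1 (by linarith [pi_pos, ht.2])) n
  calc sin t ^ n * cos t ≤ sin t ^ n * 1 :=
        mul_le_mul_of_nonneg_left (Real.cos_le_one t) h2
    _ = sin t ^ n := mul_one _

lemma upper_bound (n : ℕ) {a : ℝ} (ha : 0 < a) (ha' : a ≤ π/2) :
    (∫ t in (0:ℝ)..a, sin t ^ n) ≤ (∫ t in (0:ℝ)..(π/2), sin t ^ n) * sin a ^ (n+1) := by
  set I : ℝ → ℝ := fun y => ∫ t in (0:ℝ)..y, sin t ^ n with hI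
  set F : ℝ → ℝ := fun y => I y / sin y ^ (n+1) with hF
  have hIcont : Continuous I :=
    continuous_iff_continuousAt.mpr fun x => (hasDerivAt_I n x).continuousAt
  have hsin : ∀ x ∈ Set.Icc a (π/2), 0 < sin x := fun x hx =>
    Real.sin_pos_of_pos_of_lt_pi (lt_of_lt_of_le ha hx.1) (by linarith [pi_pos, hx.2])
  have hFd : ∀ x ∈ Set.Ioo a (π/2), HasDerivAt F
      ((sin x ^ n * sin x ^ (n+1) - I x * (((n+1:ℕ):ℝ) * sin x ^ n * cos x)) /
        (sin x ^ (n+1))^2) x := by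
    intro x hx
    have hsx : (0:ℝ) < sin x := hsin x ⟨hx.1.le, hx.2.le⟩
    exact (hasDerivAt_I n x).div ((Real.hasDerivAt_sin x).pow (n+1))
      (pow_ne_zero _ hsx.ne')
  have hmono : MonotoneOn F (Set.Icc a (π/2)) := by
    apply monotoneOn_of_deriv_nonneg (convex_Icc _ _)
    · apply ContinuousOn.div hIcont.continuousOn
        (continuous_sin.pow (n+1)).continuousOn
      exact fun x hx => pow_ne_zero _ (hsin x hx).ne'
    · intro x hx
      rw [interior_Icc] at hx
      exact (hFd x hx).differentiableAt.differentiableWithinAt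
    · intro x hx
      rw [interior_Icc] at hx
      rw [(hFd x hx).deriv]
      have hsx : (0:ℝ) < sin x := hsin x ⟨hx.1.le, hx.2.le⟩
      apply div_nonneg _ (sq_nonneg _)
      have hk : ((n:ℝ)+1) * cos x * I x ≤ sin x ^ (n+1) :=
        key_ineq n (by linarith [ha, hx.1]) hx.2.le
      have hsn : (0:ℝ) ≤ sin x ^ n := pow_nonneg hsx.le n
      have : sin x ^ n * (((n:ℝ)+1) * cos x * I x) ≤ sin x ^ n * sin x ^ (n+1) :=
        mul_le_mul_of_nonneg_left hk hsn
      push_cast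
      nlinarith [this]
  have hend : F a ≤ F (π/2) :=
    hmono ⟨le_refl a, ha'⟩ ⟨ha', le_refl _⟩ ha'
  have hFpi : F (π/2) = ∫ t in (0:ℝ)..(π/2), sin t ^ n := by
    simp [hF, hI, Real.sin_pi_div_two]
  have hsa : (0:ℝ) < sin a ^ (n+1) :=
    pow_pos (Real.sin_pos_of_pos_of_lt_pi ha (by linarith [pi_pos])) _
  have := hend
  rw [hFpi] at this
  rw [hF] at this
  simp only [hI] at this ⊢
  calc (∫ t in (0:ℝ)..a, sin t ^ n)
      = ((∫ t in (0:ℝ)..a, sin t ^ n) / sin a ^ (n+1)) * sin a ^ (n+1) := by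
        field_simp
    _ ≤ (∫ t in (0:ℝ)..(π/2), sin t ^ n) * sin a ^ (n+1) :=
        mul_le_mul_of_nonneg_right this hsa.le

theorem stmt1 (p : ℕ) (hp : 1 ≤ p) (α ε : ℝ) (hα : 0 < α) (hα' : α ≤ Real.pi / 2)
    (hε : ε = Real.sin α) :
    ε ^ p / p ≤ Jpk p p α ∧
    Jpk p p α ≤ Osph p / (2 * Osph (p - 1)) * ε ^ p ∧
    (α = Real.pi / 2 → Jpk p p α = Osph p / (2 * Osph (p - 1)) * ε ^ p) := by
  obtain ⟨n, rfl⟩ : ∃ n, p = n + 1 := ⟨p - 1, (Nat.succ_pred_eq_of_pos hp).symm⟩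
  have hJ : Jpk (n+1) (n+1) α = ∫ ρ in (0:ℝ)..α, sin ρ ^ n := by
    simp [Jpk]
  have hC : Osph (n+1) / (2 * Osph ((n+1) - 1)) = ∫ x in (0:ℝ)..(π/2), sin x ^ n := by
    simpa using Osph_const n
  subst hε
  refine ⟨?_, ?_, ?_⟩
  · rw [hJ]
    push_cast
    exact lower_bound n hα hα'
  · rw [hJ, hC]
    exact upper_bound n hα hα'
  · intro h
    subst h
    rw [hJ, hC, Real.sin_pi_div_two, one_pow, mul_one]
end

section
/- The function α ↦ J_{p,p}(α) / (sin α)^p is monotonically increasing on (0, π/2], where J_{p,p}(α) = ∫₀^α (sin ρ)^{p-1} dρ. -/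
open Real MeasureTheory
open scoped RealInnerProductSpace

lemma Jpp_eq (q : ℕ) (α : ℝ) : Jpk (q+1) (q+1) α = ∫ ρ in (0:ℝ)..α, Real.sin ρ ^ q := by
  simp [Jpk]

lemma hJderiv (q : ℕ) (α : ℝ) :
    HasDerivAt (fun x => Jpk (q+1) (q+1) x) (Real.sin α ^ q) α := by
  have hc : Continuous fun ρ : ℝ => Real.sin ρ ^ q := by continuity
  have := intervalIntegral.integral_hasDerivAt_right
    (hc.intervalIntegrable 0 α)
    (hc.stronglyMeasurableAtFilter _ _)
    hc.continuousAt
  exact this.congr_of_eventuallyEq (Filter.Eventually.of_forall fun x => Jpp_eq q x)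

lemma J_nonneg (q : ℕ) {α : ℝ} (h0 : 0 ≤ α) (h1 : α ≤ Real.pi) :
    0 ≤ Jpk (q+1) (q+1) α := by
  rw [Jpp_eq]
  apply intervalIntegral.integral_nonneg h0
  intro x hx
  exact pow_nonneg (Real.sin_nonneg_of_nonneg_of_le_pi hx.1 (hx.2.trans h1)) _

lemma key (q : ℕ) : ∀ α ∈ Set.Icc (0:ℝ) (Real.pi/2),
    (q+1 : ℝ) * Real.cos α * Jpk (q+1) (q+1) α ≤ Real.sin α ^ (q+1) := by
  set g : ℝ → ℝ := fun α => Real.sin α ^ (q+1) - (q+1 : ℝ) * Real.cos α * Jpk (q+1) (q+1) α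
    with hg
  have hd : ∀ α : ℝ, HasDerivAt g
      ((q+1:ℝ) * Real.sin α * Jpk (q+1) (q+1) α) α := by
    intro α
    have h1 : HasDerivAt (fun x => Real.sin x ^ (q+1))
        ((q+1:ℝ) * Real.sin α ^ q * Real.cos α) α := by
      simpa using (Real.hasDerivAt_sin α).fun_pow (q+1)
    have h2 : HasDerivAt (fun x => (q+1:ℝ) * Real.cos x * Jpk (q+1) (q+1) x)
        ((q+1:ℝ) * (-Real.sin α) * Jpk (q+1) (q+1) α +
          (q+1:ℝ) * Real.cos α * Real.sin α ^ q) α := by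
      exact (((Real.hasDerivAt_cos α).const_mul ((q:ℝ)+1)).mul (hJderiv q α))
    have : HasDerivAt g _ α := h1.fun_sub h2
    convert this using 1
    ring
  have hmono : MonotoneOn g (Set.Icc 0 (Real.pi/2)) := by
    apply monotoneOn_of_deriv_nonneg (convex_Icc _ _)
    · exact fun x _ => (hd x).continuousAt.continuousWithinAt
    · exact fun x hx => (hd x).differentiableAt.differentiableWithinAt
    · intro x hx
      rw [interior_Icc] at hx
      rw [(hd x).deriv]
      have hs : 0 ≤ Real.sin x := Real.sin_nonneg_of_nonneg_of_le_pi hx.1.le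
        (hx.2.le.trans (by linarith [Real.pi_pos]))
      have hJ : 0 ≤ Jpk (q+1) (q+1) x := J_nonneg q hx.1.le
        (hx.2.le.trans (by linarith [Real.pi_pos]))
      positivity
  intro α hα
  have h0 : g 0 = 0 := by simp [hg, Jpk]
  have := hmono (Set.left_mem_Icc.2 (by positivity)) hα hα.1
  rw [h0] at this
  simpa [hg] using this

theorem stmt2 (p : ℕ) (hp : 1 ≤ p) :
    MonotoneOn (fun α => Jpk p p α / Real.sin α ^ p) (Set.Ioc 0 (Real.pi / 2)) := by
  obtain ⟨q, rfl⟩ : ∃ q, p = q + 1 := ⟨p - 1, (Nat.succ_pred_eq_of_pos hp).symm⟩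
  apply monotoneOn_of_deriv_nonneg (convex_Ioc _ _)
  · -- continuity
    apply ContinuousOn.div
    · exact fun x _ => ((hJderiv q x).continuousAt).continuousWithinAt
    · exact (Real.continuous_sin.pow _).continuousOn
    · intro x hx
      have : 0 < Real.sin x := Real.sin_pos_of_pos_of_lt_pi hx.1
        (hx.2.trans_lt (by linarith [Real.pi_pos]))
      positivity
  · intro x hx
    rw [interior_Ioc] at hx
    have hs : 0 < Real.sin x := Real.sin_pos_of_pos_of_lt_pi hx.1
      (hx.2.trans (by linarith [Real.pi_pos]))
    have hpow : HasDerivAt (fun y => Real.sin y ^ (q+1))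
        ((q+1:ℝ) * Real.sin x ^ q * Real.cos x) x := by
      simpa using (Real.hasDerivAt_sin x).fun_pow (q+1)
    exact (((hJderiv q x).div hpow (by positivity)).differentiableAt).differentiableWithinAt
  · intro x hx
    rw [interior_Ioc] at hx
    have hs : 0 < Real.sin x := Real.sin_pos_of_pos_of_lt_pi hx.1
      (hx.2.trans (by linarith [Real.pi_pos]))
    have hpow : HasDerivAt (fun y => Real.sin y ^ (q+1))
        ((q+1:ℝ) * Real.sin x ^ q * Real.cos x) x := by
      simpa using (Real.hasDerivAt_sin x).fun_pow (q+1)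
    have hdiv := (hJderiv q x).fun_div hpow (by positivity)
    rw [hdiv.deriv]
    have hk := key q x ⟨hx.1.le, hx.2.le⟩
    apply div_nonneg _ (by positivity)
    have : Real.sin x ^ q * ((q+1:ℝ) * Real.cos x * Jpk (q+1) (q+1) x)
        ≤ Real.sin x ^ q * Real.sin x ^ (q+1) :=
      mul_le_mul_of_nonneg_left hk (by positivity)
    nlinarith [this]
end

section
/- Let X_σ ≥ 1, for 0 < σ ≤ 1, be a random variable satisfying for all 0 < ε ≤ 1 and some integers p ≥ 2, d ≥ 1: Prob{X_σ ≥ 1/ε} ≤ 4 Σ_{k=1}^{p−1} binom(p,k)(2d)^k (1 + ε/σ)^{p−k}(ε/σ)^k + 2(p+2)(2d)^p (ε/σ)^p. Then for all ε ≤ σ / ((1+2d)(p−1)) one has Prob{X_σ ≥ 1/ε} ≤ (8e + 4) d p ε / σ, and E(ln X_σ) ≤ 2 ln p + 2 ln d + 2 ln(1/σ) + 5.5. -/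
open Real MeasureTheory
open scoped RealInnerProductSpace

set_option maxHeartbeats 2000000 in
/-- Tail-to-expectation transfer (final Proposition of Section 3).  If a random
variable X_σ ≥ 1 satisfies the stated tail bound for all 0 < ε ≤ 1, then for all
ε ≤ σ/((1+2d)(p-1)) one has Prob{X_σ ≥ 1/ε} ≤ (8e+4)dp·ε/σ, and
E(ln X_σ) ≤ 2 ln p + 2 ln d + 2 ln(1/σ) + 5.5. -/
theorem stmt19 {Ω : Type*} [MeasurableSpace Ω] (μ : Measure Ω) [IsProbabilityMeasure μ]
    (p d : ℕ) (hp : 2 ≤ p) (hd : 1 ≤ d)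
    (σ : ℝ) (hσ : 0 < σ) (hσ1 : σ ≤ 1)
    (X : Ω → ℝ) (hX : Measurable X) (hX1 : ∀ ω, 1 ≤ X ω)
    (htail : ∀ ε : ℝ, 0 < ε → ε ≤ 1 →
      (μ {ω | 1 / ε ≤ X ω}).toReal
        ≤ 4 * ∑ k ∈ Finset.Icc 1 (p - 1),
            (p.choose k : ℝ) * (2 * d) ^ k * (1 + ε / σ) ^ (p - k) * (ε / σ) ^ k
          + 2 * ((p : ℝ) + 2) * (2 * d) ^ p * (ε / σ) ^ p) :
    (∀ ε : ℝ, 0 < ε → ε ≤ σ / ((1 + 2 * d) * (p - 1)) →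
      (μ {ω | 1 / ε ≤ X ω}).toReal ≤ (8 * Real.exp 1 + 4) * d * p * ε / σ) ∧
    ∫ ω, Real.log (X ω) ∂μ
      ≤ 2 * Real.log p + 2 * Real.log d + 2 * Real.log (1 / σ) + 5.5 := by
  have e1 : (2.7182818283 : ℝ) < Real.exp 1 := Real.exp_one_gt_d9
  have e2 : Real.exp 1 < 2.7182818286 := Real.exp_one_lt_d9
  have hq2 : (2:ℝ) ≤ (p:ℝ) := by exact_mod_cast hp
  have hD1 : (1:ℝ) ≤ (d:ℝ) := by exact_mod_cast hd
  have hF3 : (3:ℝ) ≤ (1 + 2*(d:ℝ)) * ((p:ℝ) - 1) := by nlinarith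
  have hFpos : (0:ℝ) < (1 + 2*(d:ℝ)) * ((p:ℝ) - 1) := by linarith
  have main : ∀ ε : ℝ, 0 < ε → ε ≤ σ / ((1 + 2 * d) * (p - 1)) →
      (μ {ω | 1 / ε ≤ X ω}).toReal ≤ (8 * Real.exp 1 + 4) * d * p * ε / σ := by
    intro ε hε hεb
    have hε1 : ε ≤ 1 := by
      refine hεb.trans ?_
      rw [div_le_one hFpos]; linarith
    have hεF : ε * ((1 + 2*(d:ℝ)) * ((p:ℝ) - 1)) ≤ σ := (le_div_iff₀ hFpos).mp hεb
    set t := ε / σ with htdef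
    have ht0 : 0 < t := div_pos hε hσ
    have htσ : t * σ = ε := div_mul_cancel₀ ε hσ.ne'
    have htb : (1 + 2*(d:ℝ)) * ((p:ℝ) - 1) * t ≤ 1 := by
      nlinarith [hεF, hσ, htσ]
    have H := htail ε hε hε1
    rw [← htdef] at H
    have hgoal_eq : (8 * Real.exp 1 + 4) * (d:ℝ) * p * ε / σ
        = (8 * Real.exp 1 + 4) * d * p * t := by
      rw [htdef]; ring
    rw [hgoal_eq]
    refine H.trans ?_
    rcases Nat.lt_or_ge p 3 with hp3 | hp3
    · -- p = 2
      have hp2 : p = 2 := by omega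
      subst hp2
      rw [show (2:ℕ) - 1 = 1 from rfl, Finset.Icc_self, Finset.sum_singleton]
      have h2dt : 2*(d:ℝ)*t ≤ 1 := by nlinarith [htb, ht0.le]
      have h3t : 3*t ≤ 1 := by nlinarith [htb, hD1, ht0.le]
      have hdt : (0:ℝ) ≤ (d:ℝ)*t := by positivity
      norm_num
      nlinarith [mul_nonneg hdt (by linarith : (0:ℝ) ≤ 1 - 3*t),
        mul_nonneg hdt (by linarith : (0:ℝ) ≤ 1 - 2*(d:ℝ)*t),
        mul_nonneg hdt (by linarith : (0:ℝ) ≤ Real.exp 1 - 2), hdt, ht0.le]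
    · -- p ≥ 3
      have hsum : ∑ k ∈ Finset.Icc 1 (p - 1),
          (p.choose k : ℝ) * (2 * d) ^ k * (1 + t) ^ (p - k) * t ^ k
          ≤ 2 * Real.exp 1 * d * p * t := by
        have ht0' : (0:ℝ) ≤ t := ht0.le
        have h1t : (0:ℝ) ≤ 1 + t := by linarith
        have hstep : ∀ k ∈ Finset.Icc 1 (p-1),
            (p.choose k : ℝ) * (2 * d) ^ k * (1 + t) ^ (p - k) * t ^ k
            ≤ 2 * d * p * t *
              ((2*(d:ℝ)*t)^(k-1) * (1+t)^((p-1)-(k-1)) * ((p-1).choose (k-1) : ℝ)) := by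
          intro k hk
          obtain ⟨hk1, hk2⟩ := Finset.mem_Icc.mp hk
          have hch : (p.choose k : ℝ) ≤ (p:ℝ) * ((p-1).choose (k-1) : ℝ) := by
            have hid : p * (p-1).choose (k-1) = p.choose k * k := by
              have h := Nat.add_one_mul_choose_eq (p-1) (k-1)
              rw [
                Nat.sub_add_cancel (by omega : 1 ≤ p),
                Nat.sub_add_cancel (by omega : 1 ≤ k)] at h
              exact h
            have h2 : p.choose k ≤ p * (p-1).choose (k-1) := by
              rw [hid]; exact Nat.le_mul_of_pos_right _ (by omega)
            exact_mod_cast h2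
          have he : p - k = (p-1) - (k-1) := by omega
          have hpow : (2*(d:ℝ)*t) ^ k = (2*(d:ℝ)*t)^(k-1) * (2*(d:ℝ)*t) := by
            conv_lhs => rw [show k = (k-1)+1 from by omega]
            rw [pow_succ]
          have hnn : (0:ℝ) ≤ (2*(d:ℝ)*t)^(k-1) * (1+t)^((p-1)-(k-1)) := by positivity
          have h7 : (2*(d:ℝ))^k * t^k = (2*(d:ℝ)*t)^(k-1) * (2*(d:ℝ)*t) := by
            rw [← mul_pow, hpow]
          calc (p.choose k : ℝ) * (2 * d) ^ k * (1 + t) ^ (p - k) * t ^ k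
              = (p.choose k : ℝ) * ((2*(d:ℝ)*t)^(k-1) * (1+t)^((p-1)-(k-1))) * (2*(d:ℝ)*t) := by
                rw [he]
                linear_combination ((p.choose k : ℝ) * (1+t)^((p-1)-(k-1))) * h7
            _ ≤ ((p:ℝ) * ((p-1).choose (k-1) : ℝ)) *
                  ((2*(d:ℝ)*t)^(k-1) * (1+t)^((p-1)-(k-1))) * (2*(d:ℝ)*t) := by
                have h2dt : (0:ℝ) ≤ 2*(d:ℝ)*t := by positivity
                exact mul_le_mul_of_nonneg_right
                  (mul_le_mul_of_nonneg_right hch hnn) h2dt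
            _ = 2 * d * p * t *
                  ((2*(d:ℝ)*t)^(k-1) * (1+t)^((p-1)-(k-1)) * ((p-1).choose (k-1) : ℝ)) := by
                ring
        have hIcc : Finset.Icc 1 (p-1) = Finset.Ico 1 p := by
          ext x
          simp only [Finset.mem_Icc, Finset.mem_Ico]
          omega
        calc (∑ k ∈ Finset.Icc 1 (p - 1),
              (p.choose k : ℝ) * (2 * d) ^ k * (1 + t) ^ (p - k) * t ^ k)
            ≤ ∑ k ∈ Finset.Icc 1 (p-1), 2 * d * p * t *
                ((2*(d:ℝ)*t)^(k-1) * (1+t)^((p-1)-(k-1)) * ((p-1).choose (k-1) : ℝ)) :=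
              Finset.sum_le_sum hstep
          _ = 2 * d * p * t * ∑ k ∈ Finset.Icc 1 (p-1),
                ((2*(d:ℝ)*t)^(k-1) * (1+t)^((p-1)-(k-1)) * ((p-1).choose (k-1) : ℝ)) := by
              rw [Finset.mul_sum]
          _ = 2 * d * p * t * ∑ j ∈ Finset.range (p-1),
                ((2*(d:ℝ)*t)^j * (1+t)^((p-1)-j) * ((p-1).choose j : ℝ)) := by
              congr 1
              rw [hIcc, Finset.sum_Ico_eq_sum_range]
              refine Finset.sum_congr rfl fun i _ => ?_
              rw [show 1 + i - 1 = i from by omega]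
          _ ≤ 2 * d * p * t * ∑ j ∈ Finset.range p,
                ((2*(d:ℝ)*t)^j * (1+t)^((p-1)-j) * ((p-1).choose j : ℝ)) := by
              refine mul_le_mul_of_nonneg_left ?_ (by positivity)
              refine Finset.sum_le_sum_of_subset_of_nonneg
                (Finset.range_subset_range.mpr (by omega)) ?_
              intro i _ _; positivity
          _ = 2 * d * p * t * (2*(d:ℝ)*t + (1+t))^(p-1) := by
              congr 1
              rw [add_pow, Nat.sub_add_cancel (by omega : 1 ≤ p)]
          _ ≤ 2 * d * p * t * Real.exp 1 := by
              refine mul_le_mul_of_nonneg_left ?_ (by positivity)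
              have h1 : 2*(d:ℝ)*t + (1+t) = 1 + (1+2*(d:ℝ))*t := by ring
              rw [h1]
              have h2 : 1 + (1+2*(d:ℝ))*t ≤ Real.exp ((1+2*(d:ℝ))*t) := by
                linarith [Real.add_one_le_exp ((1+2*(d:ℝ))*t)]
              have hu : (0:ℝ) ≤ (1+2*(d:ℝ))*t := by positivity
              calc (1 + (1+2*(d:ℝ))*t)^(p-1)
                  ≤ Real.exp ((1+2*(d:ℝ))*t) ^ (p-1) :=
                    pow_le_pow_left₀ (by linarith) h2 _
                _ = Real.exp (((p-1:ℕ):ℝ) * ((1+2*(d:ℝ))*t)) := (Real.exp_nat_mul _ _).symm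
                _ ≤ Real.exp 1 := by
                    refine Real.exp_le_exp.mpr ?_
                    rw [Nat.cast_sub (by omega : 1 ≤ p), Nat.cast_one,
                      show ((p:ℝ)-1) * ((1+2*(d:ℝ))*t) = (1+2*(d:ℝ))*((p:ℝ)-1)*t from by ring]
                    exact htb
          _ = 2 * Real.exp 1 * d * p * t := by ring
      have hsecond : 2*((p:ℝ)+2)*(2*(d:ℝ))^p*t^p ≤ 4*d*p*t := by
        have hq1 : (0:ℝ) < (p:ℝ)-1 := by linarith
        have ha1 : 2*(d:ℝ)*t ≤ 1/((p:ℝ)-1) := by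
          rw [le_div_iff₀ hq1]
          nlinarith [htb, mul_nonneg (by linarith : (0:ℝ) ≤ (p:ℝ)-1) ht0.le]
        have hq1' : 1/((p:ℝ)-1) ≤ 1 := by
          rw [div_le_one hq1]; linarith
        have hpw : (2*(d:ℝ)*t)^(p-1) ≤ (1/((p:ℝ)-1))^2 := by
          calc (2*(d:ℝ)*t)^(p-1) ≤ (1/((p:ℝ)-1))^(p-1) :=
                pow_le_pow_left₀ (by positivity) ha1 _
            _ ≤ (1/((p:ℝ)-1))^2 :=
                pow_le_pow_of_le_one (by positivity) hq1' (by omega)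
        have hpp : (2*(d:ℝ))^p * t^p = (2*(d:ℝ)*t)^(p-1) * (2*(d:ℝ)*t) := by
          rw [← mul_pow]
          conv_lhs => rw [show p = (p-1)+1 from by omega]
          rw [pow_succ]
        calc 2*((p:ℝ)+2)*(2*(d:ℝ))^p*t^p
            = 2*((p:ℝ)+2)*((2*(d:ℝ)*t)^(p-1)*(2*(d:ℝ)*t)) := by
              rw [mul_assoc, hpp]
          _ ≤ 2*((p:ℝ)+2)*((1/((p:ℝ)-1))^2*(2*(d:ℝ)*t)) := by
              refine mul_le_mul_of_nonneg_left ?_ (by linarith)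
              exact mul_le_mul_of_nonneg_right hpw (by positivity)
          _ ≤ 4*d*p*t := by
              set u := (1/((p:ℝ)-1))^2 with hu'
              have hu0 : (0:ℝ) ≤ u := by positivity
              have hwne : ((p:ℝ)-1) ≠ 0 := by linarith
              have huw : u * ((p:ℝ)-1)^2 = 1 := by
                rw [hu']; field_simp
              have hq3 : (3:ℝ) ≤ (p:ℝ) := by exact_mod_cast hp3
              have hkey : (0:ℝ) ≤ 4*(d:ℝ)*t*(u*((p:ℝ)*((p:ℝ)-1)^2 - (p:ℝ) - 2)) := by
                refine mul_nonneg (by positivity) (mul_nonneg hu0 ?_)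
                nlinarith [hq3, mul_nonneg (mul_nonneg
                  (by linarith : (0:ℝ) ≤ (p:ℝ)-3) (by linarith : (0:ℝ) ≤ (p:ℝ)-1))
                  (by linarith : (0:ℝ) ≤ (p:ℝ))]
              have h8 : 4*(d:ℝ)*t*(p:ℝ)*(u*((p:ℝ)-1)^2) = 4*(d:ℝ)*t*(p:ℝ) := by
                rw [huw]; ring
              nlinarith [hkey, h8]
      calc 4 * ∑ k ∈ Finset.Icc 1 (p - 1),
            (p.choose k : ℝ) * (2 * d) ^ k * (1 + t) ^ (p - k) * t ^ k
            + 2 * ((p:ℝ) + 2) * (2 * d) ^ p * t ^ p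
          ≤ 4 * (2 * Real.exp 1 * d * p * t) + 4*d*p*t := by
            have := hsum; have := hsecond; linarith
        _ = (8 * Real.exp 1 + 4) * d * p * t := by ring
  refine ⟨main, ?_⟩
  -- expectation bound
  have hdq : (2:ℝ) ≤ (d:ℝ)*(p:ℝ) := by nlinarith [hD1, hq2]
  have hKpos : (0:ℝ) < (8 * Real.exp 1 + 4) * d * p := by
    have h0 : (0:ℝ) < 8 * Real.exp 1 + 4 := by positivity
    exact mul_pos (mul_pos h0 (by linarith)) (by linarith)
  set C : ℝ := (8 * Real.exp 1 + 4) * d * p / σ with hC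
  have hCpos : 0 < C := div_pos hKpos hσ
  have hC1 : 1 ≤ C := by
    rw [hC, le_div_iff₀ hσ]
    nlinarith [Real.exp_pos 1, hdq, mul_nonneg (Real.exp_pos 1).le (by linarith : (0:ℝ) ≤ (d:ℝ)*(p:ℝ) - 2)]
  set s : ℝ := Real.log C with hs
  have hs0 : 0 ≤ s := Real.log_nonneg hC1
  have hXpos : ∀ ω, 0 < X ω := fun ω => lt_of_lt_of_le one_pos (hX1 ω)
  set A : ℕ → Set Ω := fun n => {ω | Real.exp (s + n) ≤ X ω} with hA
  have hAmeas : ∀ n : ℕ, MeasurableSet (A n) := fun n =>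
    measurableSet_le measurable_const hX
  have htailn : ∀ n : ℕ, μ (A n) ≤ ENNReal.ofReal (Real.exp (-1) ^ n) := by
    intro n
    set ε := Real.exp (-(s + n)) with hεdef
    have hεpos : 0 < ε := Real.exp_pos _
    have hεs : ε = C⁻¹ * Real.exp (-(n:ℝ)) := by
      rw [hεdef, neg_add, Real.exp_add, Real.exp_neg, hs, Real.exp_log hCpos]
    have hexpn1 : Real.exp (-(n:ℝ)) ≤ 1 :=
      Real.exp_le_one_iff.mpr (neg_nonpos.mpr (Nat.cast_nonneg n))
    have hεb : ε ≤ σ / ((1 + 2 * (d:ℝ)) * ((p:ℝ) - 1)) := by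
      have h1 : ε ≤ C⁻¹ := by
        rw [hεs]
        calc C⁻¹ * Real.exp (-(n:ℝ)) ≤ C⁻¹ * 1 :=
              mul_le_mul_of_nonneg_left hexpn1 (by positivity)
          _ = C⁻¹ := mul_one _
      refine h1.trans ?_
      have hCinv : C⁻¹ = σ / ((8 * Real.exp 1 + 4) * d * p) := by
        rw [hC, inv_div]
      rw [hCinv]
      have hFK : (1 + 2 * (d:ℝ)) * ((p:ℝ) - 1) ≤ (8 * Real.exp 1 + 4) * d * p := by
        have h3dq : (1+2*(d:ℝ))*((p:ℝ)-1) ≤ 3*((d:ℝ)*(p:ℝ)) := by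
          nlinarith [hD1, hq2, mul_nonneg (by linarith : (0:ℝ) ≤ (d:ℝ)-1) (by linarith : (0:ℝ) ≤ (p:ℝ))]
        have h4 : 3*((d:ℝ)*(p:ℝ)) ≤ (8 * Real.exp 1 + 4) * d * p := by
          nlinarith [mul_nonneg (by positivity : (0:ℝ) ≤ 8*Real.exp 1 + 1) (by linarith : (0:ℝ) ≤ (d:ℝ)*(p:ℝ))]
        linarith
      gcongr
    have hTT := main ε hεpos hεb
    have hset : {ω | 1/ε ≤ X ω} = A n := by
      rw [hA]
      have h1 : 1/ε = Real.exp (s + n) := by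
        rw [hεdef, Real.exp_neg, one_div, inv_inv]
      rw [h1]
    rw [hset] at hTT
    have hval : (8 * Real.exp 1 + 4) * (d:ℝ) * (p:ℝ) * ε / σ = Real.exp (-(n:ℝ)) := by
      rw [hεs, hC]
      field_simp
    rw [hval] at hTT
    have h5 : Real.exp (-1:ℝ) ^ n = Real.exp (-(n:ℝ)) := by
      rw [← Real.exp_nat_mul, mul_neg, mul_one]
    have hne : μ (A n) ≠ ⊤ := measure_ne_top μ _
    rw [h5, ← ENNReal.ofReal_toReal hne]
    exact ENNReal.ofReal_le_ofReal hTT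
  have hpt : ∀ ω, ENNReal.ofReal (Real.log (X ω)) ≤
      ENNReal.ofReal s + ∑' n : ℕ, (A n).indicator (fun _ => (1:ENNReal)) ω := by
    intro ω
    by_cases hcase : Real.log (X ω) ≤ s
    · exact (ENNReal.ofReal_le_ofReal hcase).trans le_self_add
    · push_neg at hcase
      set y := Real.log (X ω) with hy
      set m := Nat.floor (y - s) with hm
      have hmle : (m:ℝ) ≤ y - s := Nat.floor_le (by linarith)
      have hylt : y - s < m + 1 := Nat.lt_floor_add_one _
      have hind : ∀ n ∈ Finset.range (m+1),
          (A n).indicator (fun _ => (1:ENNReal)) ω = 1 := by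
        intro n hn
        refine Set.indicator_of_mem ?_ _
        show Real.exp (s + n) ≤ X ω
        have hn' : (n:ℝ) ≤ m := by
          exact_mod_cast Nat.lt_succ_iff.mp (Finset.mem_range.mp hn)
        have h6 : s + n ≤ y := by linarith
        calc Real.exp (s + n) ≤ Real.exp y := Real.exp_le_exp.mpr h6
          _ = X ω := by rw [hy, Real.exp_log (hXpos ω)]
      have hsumv : ∑ n ∈ Finset.range (m+1),
          (A n).indicator (fun _ => (1:ENNReal)) ω = ((m:ENNReal) + 1) := by
        rw [Finset.sum_congr rfl hind, Finset.sum_const, Finset.card_range]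
        simp [add_mul]
      have hstep : ENNReal.ofReal (y - s) ≤
          ∑' n : ℕ, (A n).indicator (fun _ => (1:ENNReal)) ω := by
        calc ENNReal.ofReal (y - s) ≤ ENNReal.ofReal ((m:ℝ) + 1) :=
              ENNReal.ofReal_le_ofReal hylt.le
          _ = (m:ENNReal) + 1 := by
              rw [show ((m:ℝ) + 1) = ((m+1:ℕ):ℝ) from by push_cast; ring,
                ENNReal.ofReal_natCast]
              push_cast; ring
          _ = ∑ n ∈ Finset.range (m+1), (A n).indicator (fun _ => (1:ENNReal)) ω :=
              hsumv.symm
          _ ≤ _ := ENNReal.sum_le_tsum _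
      calc ENNReal.ofReal y = ENNReal.ofReal s + ENNReal.ofReal (y - s) := by
            rw [← ENNReal.ofReal_add hs0 (by linarith), add_sub_cancel]
        _ ≤ ENNReal.ofReal s + ∑' n : ℕ, (A n).indicator (fun _ => (1:ENNReal)) ω :=
            add_le_add_right hstep _
  have hlt1 : Real.exp (-1:ℝ) < 1 := Real.exp_lt_one_iff.mpr (by norm_num)
  have hinvpos : (0:ℝ) ≤ (1 - Real.exp (-1))⁻¹ := by
    have : (0:ℝ) < 1 - Real.exp (-1) := by linarith
    positivity
  have hgeom : Summable (fun n : ℕ => Real.exp (-1:ℝ) ^ n) :=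
    summable_geometric_of_lt_one (Real.exp_pos _).le hlt1
  have hlint : ∫⁻ ω, ENNReal.ofReal (Real.log (X ω)) ∂μ
      ≤ ENNReal.ofReal (s + (1 - Real.exp (-1))⁻¹) := by
    calc ∫⁻ ω, ENNReal.ofReal (Real.log (X ω)) ∂μ
        ≤ ∫⁻ ω, (ENNReal.ofReal s + ∑' n : ℕ, (A n).indicator (fun _ => (1:ENNReal)) ω) ∂μ :=
          lintegral_mono hpt
      _ = ENNReal.ofReal s + ∑' n : ℕ, μ (A n) := by
          rw [lintegral_add_left measurable_const, lintegral_const, measure_univ, mul_one]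
          congr 1
          rw [lintegral_tsum (fun n => ((measurable_const.indicator (hAmeas n)).aemeasurable))]
          congr 1
          funext n
          rw [lintegral_indicator_const (hAmeas n), one_mul]
      _ ≤ ENNReal.ofReal s + ∑' n : ℕ, ENNReal.ofReal (Real.exp (-1:ℝ) ^ n) :=
          add_le_add_right (ENNReal.tsum_le_tsum htailn) _
      _ = ENNReal.ofReal s + ENNReal.ofReal (∑' n : ℕ, Real.exp (-1:ℝ) ^ n) := by
          rw [ENNReal.ofReal_tsum_of_nonneg (fun n => by positivity) hgeom]
      _ = ENNReal.ofReal (s + (1 - Real.exp (-1))⁻¹) := by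
          rw [tsum_geometric_of_lt_one (Real.exp_pos _).le hlt1,
            ← ENNReal.ofReal_add hs0 hinvpos]
  have hmeas : Measurable fun ω => Real.log (X ω) := Real.measurable_log.comp hX
  have hlog0 : ∀ ω, 0 ≤ Real.log (X ω) := fun ω => Real.log_nonneg (hX1 ω)
  have hint_eq : ∫ ω, Real.log (X ω) ∂μ
      = (∫⁻ ω, ENNReal.ofReal (Real.log (X ω)) ∂μ).toReal :=
    integral_eq_lintegral_of_nonneg_ae (Filter.Eventually.of_forall hlog0)
      hmeas.aestronglyMeasurable
  rw [hint_eq]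
  have hfinal : (∫⁻ ω, ENNReal.ofReal (Real.log (X ω)) ∂μ).toReal
      ≤ s + (1 - Real.exp (-1))⁻¹ :=
    ENNReal.toReal_le_of_le_ofReal (by linarith) hlint
  refine hfinal.trans ?_
  -- numerics
  have hlogp : 0 ≤ Real.log (p:ℝ) := Real.log_nonneg (by linarith)
  have hlogd : 0 ≤ Real.log (d:ℝ) := Real.log_nonneg hD1
  have hlogσ : 0 ≤ Real.log (1/σ) := Real.log_nonneg (by
    rw [le_div_iff₀ hσ]; linarith)
  have hsval : s = Real.log (8 * Real.exp 1 + 4) + Real.log (d:ℝ) + Real.log (p:ℝ)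
      + Real.log (1/σ) := by
    rw [hs, hC, show (8 * Real.exp 1 + 4) * (d:ℝ) * (p:ℝ) / σ
        = (8 * Real.exp 1 + 4) * (d:ℝ) * (p:ℝ) * (1/σ) from by ring]
    rw [Real.log_mul (by positivity) (by positivity),
      Real.log_mul (by positivity) (by linarith),
      Real.log_mul (by positivity) (by linarith)]
  have hlogK : Real.log (8 * Real.exp 1 + 4) ≤ 3.3 := by
    rw [Real.log_le_iff_le_exp (by positivity)]
    have hsplit : Real.exp (3.3:ℝ) = Real.exp 1 * Real.exp 1 * Real.exp 1 * Real.exp 0.3 := by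
      rw [← Real.exp_add, ← Real.exp_add, ← Real.exp_add]; norm_num
    have h03 : (1.3:ℝ) ≤ Real.exp 0.3 := by
      have := Real.add_one_le_exp (0.3:ℝ); linarith
    have ha2 : (7.389:ℝ) ≤ Real.exp 1 * Real.exp 1 := by nlinarith [e1]
    have ha3 : (20.085:ℝ) ≤ Real.exp 1 * Real.exp 1 * Real.exp 1 := by nlinarith [e1, ha2]
    rw [hsplit]
    nlinarith [ha3, h03, e2, Real.exp_pos (0.3:ℝ)]
  have hinv : (1 - Real.exp (-1))⁻¹ ≤ 1.6 := by
    have he8 : (8:ℝ)/3 ≤ Real.exp 1 := by linarith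
    have h1 : Real.exp (-1:ℝ) ≤ 3/8 := by
      rw [Real.exp_neg]
      calc (Real.exp 1)⁻¹ ≤ ((8:ℝ)/3)⁻¹ :=
            inv_anti₀ (by norm_num) he8
        _ = 3/8 := by norm_num
    have h2 : (5:ℝ)/8 ≤ 1 - Real.exp (-1) := by linarith
    calc (1 - Real.exp (-1))⁻¹ ≤ ((5:ℝ)/8)⁻¹ :=
          inv_anti₀ (by norm_num) h2
      _ ≤ 1.6 := by norm_num
  rw [hsval]
  have h1σ : Real.log (1/σ) = Real.log (1/σ) := rfl
  linarith [hlogp, hlogd, hlogσ, hlogK, hinv]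
end
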